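/- Let H ∈ ℝ^{3×3} with det(H) > 0 and let a, b, c ∈ ℝ² be points with w_H(a) > 0, w_H(b) > 0 and w_H(c) > 0. Then sgn(cross(f_H(a), f_H(b), f_H(c))) = sgn(cross(a, b, c)); in particular, the orientation (convexity sign) of each triple of points is preserved under the homography f_H. -/
import Mathlib
set_option maxHeartbeats 1000000

/-- The cross value of three points in the plane: the z-coordinate of the
cross product `(b - a) × (c - b)`. -/
noncomputable def cross (a b c : ℝ × ℝ) : ℝ :=
  (b.1 - a.1) * (c.2 - b.2) - (b.2 - a.2) * (c.1 - b.1)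

/-- The lift of a planar point `(x, y)` to `(x, y, 1) ∈ ℝ³`. -/
noncomputable def liftPt (p : ℝ × ℝ) : Fin 3 → ℝ := ![p.1, p.2, 1]

/-- The homography denominator: the third coordinate of `H ℓ(p)`. -/
noncomputable def wH (H : Matrix (Fin 3) (Fin 3) ℝ) (p : ℝ × ℝ) : ℝ :=
  H.mulVec (liftPt p) 2

/-- The planar homography induced by the matrix `H`. -/
noncomputable def fH (H : Matrix (Fin 3) (Fin 3) ℝ) (p : ℝ × ℝ) : ℝ × ℝ :=
  (H.mulVec (liftPt p) 0 / wH H p, H.mulVec (liftPt p) 1 / wH H p)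

lemma sign_pos_mul (k x : ℝ) (hk : 0 < k) : Real.sign (k * x) = Real.sign x := by
  rcases lt_trichotomy x 0 with h | h | h
  · rw [Real.sign_of_neg h, Real.sign_of_neg (mul_neg_of_pos_of_neg hk h)]
  · simp [h]
  · rw [Real.sign_of_pos h, Real.sign_of_pos (mul_pos hk h)]

lemma cross_div (pa qa wa pb qb wb pc qc wc : ℝ)
    (hwa : wa ≠ 0) (hwb : wb ≠ 0) (hwc : wc ≠ 0) :
    cross (pa / wa, qa / wa) (pb / wb, qb / wb) (pc / wc, qc / wc)
      = (pa * qb * wc - pa * wb * qc - qa * pb * wc + qa * wb * pc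
          + wa * pb * qc - wa * qb * pc) / (wa * wb * wc) := by
  simp only [cross]
  field_simp
  ring

theorem sign_cross_fH (H : Matrix (Fin 3) (Fin 3) ℝ) (hdet : 0 < H.det)
    (a b c : ℝ × ℝ)
    (ha : 0 < wH H a) (hb : 0 < wH H b) (hc : 0 < wH H c) :
    Real.sign (cross (fH H a) (fH H b) (fH H c)) = Real.sign (cross a b c) := by
  have key : cross (fH H a) (fH H b) (fH H c)
      = (H.det / (wH H a * wH H b * wH H c)) * cross a b c := by
    have h1 := cross_div (H.mulVec (liftPt a) 0) (H.mulVec (liftPt a) 1) (wH H a)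
      (H.mulVec (liftPt b) 0) (H.mulVec (liftPt b) 1) (wH H b)
      (H.mulVec (liftPt c) 0) (H.mulVec (liftPt c) 1) (wH H c)
      ha.ne' hb.ne' hc.ne'
    show cross (H.mulVec (liftPt a) 0 / wH H a, H.mulVec (liftPt a) 1 / wH H a)
        (H.mulVec (liftPt b) 0 / wH H b, H.mulVec (liftPt b) 1 / wH H b)
        (H.mulVec (liftPt c) 0 / wH H c, H.mulVec (liftPt c) 1 / wH H c) = _
    rw [h1, div_mul_eq_mul_div]
    congr 1
    simp only [wH, liftPt, cross, Matrix.mulVec, dotProduct,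
      Fin.sum_univ_three, Matrix.det_fin_three, Matrix.cons_val_zero,
      Matrix.cons_val_one, Matrix.head_cons, Matrix.cons_val_two, Matrix.tail_cons]
    ring
  rw [key]
  exact sign_pos_mul _ _ (div_pos hdet (by positivity))
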